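/- arXiv:2101.12290 — 2 statements merged into one kernel-verified Lean document; each statement's English description precedes it below -/
import Mathlib

section
/- Let M be a matroid of rank r ≥ 2 on n elements with no loops. If for every element e the contraction M/e has at least k independent hyperplanes, then M has at least n·k/(r-1) independent hyperplanes. -/
/-!
If `e` is a nonloop, an independent hyperplane `H` of `M ／ {e}` avoids `e`, and `insert e H` is
an independent hyperplane of `M`: closures in `M ／ {e}` are closures in `M` of sets with `e`
added, minus `e`. As `insert e` is injective on sets avoiding `e`, every element of `M` lies in
at least `k` independent hyperplanes of `M`. An independent hyperplane plus any element outside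
it is a base, so it has exactly `r - 1` elements, and double counting the incidences `e ∈ H`
gives `n * k ≤ (r - 1) * #{independent hyperplanes}`.
-/

open Set

variable {α : Type*}

namespace Matroid

/-- A circuit is a minimal dependent set. -/
def Circuit (M : Matroid α) (C : Set α) : Prop :=
  M.Dep C ∧ ∀ D, M.Dep D → D ⊆ C → D = C

/-- A hyperplane is a maximal proper flat. -/
def Hyperplane (M : Matroid α) (H : Set α) : Prop :=
  M.IsFlat H ∧ H ≠ M.E ∧ ∀ F, M.IsFlat F → H ⊆ F → F = H ∨ F = M.E

/-- An independent hyperplane is a hyperplane that is an independent set. -/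
def IndepHyperplane (M : Matroid α) (H : Set α) : Prop :=
  M.Hyperplane H ∧ M.Indep H

/-- `M` has rank `r` if some (equivalently, every) base has exactly `r` elements. -/
def HasRank (M : Matroid α) (r : ℕ) : Prop :=
  ∃ B, M.IsBase B ∧ B.ncard = r

/-- A matroid of rank `r` is paving if every circuit has `r` or `r + 1` elements. -/
def Paving (M : Matroid α) : Prop :=
  ∀ r, M.HasRank r → ∀ C, M.Circuit C → C.ncard = r ∨ C.ncard = r + 1

/-- `N` is the contraction `M / e` of `M` by a non-loop element `e`. -/
def IsContractElem (M N : Matroid α) (e : α) : Prop :=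
  N.E = M.E \ {e} ∧ ∀ I, N.Indep I ↔ e ∉ I ∧ M.Indep (insert e I)

/-- `M` has no loops. -/
def Loopless' (M : Matroid α) : Prop := ∀ e ∈ M.E, M.Indep {e}

/-- `M` is simple: it has no loops and no parallel elements, i.e. every subset of the
ground set with at most two elements is independent. -/
def Simple' (M : Matroid α) : Prop :=
  ∀ I ⊆ M.E, I.Finite → I.ncard ≤ 2 → M.Indep I

end Matroid

theorem Set.ncard_mul_le_ncard_mul_of_forall_mem {S : Set α} {𝓕 : Set (Set α)} {k m : ℕ}
    (hS : S.Finite) (h𝓕 : 𝓕.Finite) (hk : ∀ a ∈ S, k ≤ {F ∈ 𝓕 | a ∈ F}.ncard)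
    (hm : ∀ F ∈ 𝓕, (F ∩ S).ncard ≤ m) : S.ncard * k ≤ 𝓕.ncard * m := by
  classical
  rw [ncard_eq_toFinset_card S hS, ncard_eq_toFinset_card 𝓕 h𝓕]
  refine Finset.card_mul_le_card_mul (· ∈ ·) (fun a ha => ?_) (fun F hF => ?_)
  · rw [← ncard_coe_finset, Finset.coe_bipartiteAbove]
    simpa using hk a (by simpa using ha)
  · rw [← ncard_coe_finset, Finset.coe_bipartiteBelow]
    simpa [inter_comm] using hm F (by simpa using hF)

namespace Matroid

variable {M : Matroid α} {H X Y : Set α} {e : α} {r : ℕ}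

lemma hyperplane_iff_closure : M.Hyperplane H ↔
    M.closure H = H ∧ H ≠ M.E ∧ ∀ f ∈ M.E \ H, M.closure (insert f H) = M.E := by
  refine ⟨fun ⟨hH, hne, hmax⟩ => ⟨hH.closure, hne, fun f hf => ?_⟩,
    fun ⟨hcl, hne, hspan⟩ => ⟨isFlat_iff_closure_eq.mpr hcl, hne, fun F hF hHF => ?_⟩⟩
  · refine (hmax _ (M.isFlat_closure _) ?_).resolve_left fun h => hf.2 ?_
    · exact M.subset_closure_of_subset' (subset_insert f H) hH.subset_ground
    · exact h ▸ M.mem_closure_of_mem' (mem_insert f H) hf.1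
  · refine or_iff_not_imp_left.mpr fun hFH => ?_
    obtain ⟨f, hfF, hfH⟩ := exists_of_ssubset (hHF.ssubset_of_ne (Ne.symm hFH))
    refine hF.subset_ground.antisymm ?_
    rw [← hspan f ⟨hF.subset_ground hfF, hfH⟩, ← hF.closure]
    exact M.closure_subset_closure (insert_subset hfF hHF)

lemma IndepHyperplane.ncard_add_one [M.RankFinite] (hr : M.HasRank r)
    (hH : M.IndepHyperplane H) : H.ncard + 1 = r := by
  obtain ⟨hcl, hne, hspan⟩ := hyperplane_iff_closure.mp hH.1
  obtain ⟨B, hB, rfl⟩ := hr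
  obtain ⟨f, hfE, hfH⟩ := exists_of_ssubset (hH.2.subset_ground.ssubset_of_ne hne)
  have hfB : M.IsBase (insert f H) := by
    refine Indep.isBase_of_ground_subset_closure ?_ (hspan f ⟨hfE, hfH⟩).ge
    exact (hH.2.insert_indep_iff_of_notMem hfH).mpr ⟨hfE, hcl.symm ▸ hfH⟩
  rw [← ncard_insert_of_notMem hfH hH.2.finite, hfB.ncard_eq_ncard_of_isBase hB]

lemma finite_setOf_indepHyperplane (M : Matroid α) [M.Finite] :
    {H | M.IndepHyperplane H}.Finite :=
  M.ground_finite.finite_subsets.subset fun _ hH => hH.2.subset_ground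

lemma IsNonloop.isContractElem (he : M.IsNonloop e) : M.IsContractElem (M ／ {e}) e :=
  ⟨contract_ground M {e}, fun _ => he.contractElem_indep_iff⟩

lemma closure_insert_eq_of_contractElem_closure_eq (he : e ∈ M.E)
    (h : (M ／ {e}).closure X = Y) : M.closure (insert e X) = insert e Y := by
  rw [contract_closure_eq, union_singleton] at h
  rw [← h, insert_sdiff_singleton, insert_eq_of_mem (M.mem_closure_of_mem' (mem_insert e X) he)]

lemma IndepHyperplane.insert_of_contractElem (he : M.IsNonloop e)
    (hH : (M ／ {e}).IndepHyperplane H) : M.IndepHyperplane (insert e H) := by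
  obtain ⟨heH, hindep⟩ := he.contractElem_indep_iff.mp hH.2
  obtain ⟨hcl, hne, hspan⟩ := hyperplane_iff_closure.mp hH.1
  rw [contract_ground] at hne hspan
  refine ⟨hyperplane_iff_closure.mpr
    ⟨closure_insert_eq_of_contractElem_closure_eq he.mem_ground hcl, fun h => hne ?_,
      fun f hf => ?_⟩, hindep⟩
  · rw [← h, insert_sdiff_self_of_notMem heH]
  · have hfH : f ∈ (M.E \ {e}) \ H := ⟨⟨hf.1, fun h => hf.2 (h ▸ mem_insert e H)⟩,
      fun h => hf.2 (mem_insert_of_mem e h)⟩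
    rw [insert_comm, closure_insert_eq_of_contractElem_closure_eq he.mem_ground (hspan f hfH),
      insert_sdiff_singleton, insert_eq_of_mem he.mem_ground]

lemma IsNonloop.ncard_indepHyperplane_contractElem_le [M.Finite] (he : M.IsNonloop e) :
    {H | (M ／ {e}).IndepHyperplane H}.ncard ≤ {H | M.IndepHyperplane H ∧ e ∈ H}.ncard := by
  refine ncard_le_ncard_of_injOn (insert e)
    (fun H hH => ⟨hH.insert_of_contractElem he, mem_insert e H⟩) (fun H₁ h₁ H₂ h₂ h => ?_)
    (M.finite_setOf_indepHyperplane.subset fun _ hH => hH.1)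
  rw [← insert_sdiff_self_of_notMem (he.contractElem_indep_iff.mp h₁.2).1,
    ← insert_sdiff_self_of_notMem (he.contractElem_indep_iff.mp h₂.2).1, h]

end Matroid

/-- If `M` has rank `r ≥ 2`, no loops, and every single-element contraction of `M` has
at least `k` independent hyperplanes, then `M` has at least `n * k / (r - 1)`
independent hyperplanes. -/
theorem count_indepHyperplanes_of_contractions (M : Matroid α) [M.Finite] (r k : ℕ)
    (hr : M.HasRank r) (hr2 : 2 ≤ r) (hl : M.Loopless')
    (hk : ∀ e ∈ M.E, ∀ N : Matroid α, M.IsContractElem N e →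
      k ≤ {H | N.IndepHyperplane H}.ncard) :
    (M.E.ncard : ℚ) * k / ((r : ℚ) - 1) ≤ ({H | M.IndepHyperplane H}.ncard : ℚ) := by
  have hcount : M.E.ncard * k ≤ {H | M.IndepHyperplane H}.ncard * (r - 1) := by
    refine ncard_mul_le_ncard_mul_of_forall_mem M.ground_finite M.finite_setOf_indepHyperplane
      (fun e he => ?_) (fun H hH => ?_)
    · have he' : M.IsNonloop e := Matroid.indep_singleton.mp (hl e he)
      exact (hk e he _ he'.isContractElem).trans he'.ncard_indepHyperplane_contractElem_le
    · rw [inter_eq_left.mpr hH.2.subset_ground, ← hH.ncard_add_one hr, Nat.add_sub_cancel]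
  have hr1 : (1 : ℚ) < r := by exact_mod_cast hr2
  rw [div_le_iff₀ (sub_pos.mpr hr1), ← Nat.cast_pred (by omega)]
  exact_mod_cast hcount
end

section
/- Suppose that every simple rank-3 oriented matroid on n ≥ 8 elements has at least 6n/13 independent hyperplanes. Then every oriented paving matroid of rank r ≥ 3 on n elements with n ≥ 5+r has at least (12/(13(r-1)))·C(n,r-2) independent hyperplanes. -/
open Set

variable {α : Type*}

namespace Matroid

/-- A matroid is orientable if its circuits admit a signing satisfying symmetry and
the signed circuit elimination axiom. -/
def Orientable (M : Matroid α) : Prop :=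
  ∃ 𝒞 : Set (α → SignType),
    (∀ X ∈ 𝒞, M.Circuit {e | X e ≠ 0}) ∧
    (∀ C, M.Circuit C → ∃ X ∈ 𝒞, {e | X e ≠ 0} = C) ∧
    (∀ X ∈ 𝒞, (fun e => -X e) ∈ 𝒞) ∧
    (∀ X ∈ 𝒞, ∀ Y ∈ 𝒞, X ≠ (fun e => -Y e) → ∀ e, X e = 1 → Y e = -1 →
      ∃ Z ∈ 𝒞, Z e = 0 ∧
        ∀ f, (Z f = 1 → (X f = 1 ∨ Y f = 1)) ∧ (Z f = -1 → (X f = -1 ∨ Y f = -1)))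

end Matroid

/-!
Contracting a non-loop `e` of an oriented paving matroid `M` of rank `r` gives an oriented paving
matroid of rank `r - 1`, and `H ↦ insert e H` is a bijection from the independent hyperplanes
of `M ／ {e}` onto those of `M` containing `e`. Summing over `e` counts every independent
hyperplane of `M`, which has `r - 1` elements, exactly `r - 1` times; with
`n * C(n - 1, r - 3) = (r - 2) * C(n, r - 2)` this turns the bound for rank `r - 1` into the
bound for rank `r`. In rank 3 a paving matroid is simple, so the hypothesis starts the induction.

The signed circuits of `M ／ {e}` are the restrictions to `M.E \ {e}` of the signed circuits `X`
of `M` for which `support X \ {e}` is a circuit of `M ／ {e}`. Circuit elimination for them uses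
a conformal elimination in `M` with as few elements outside `{e}` as possible.
-/

theorem SignType.support_neg (X : α → SignType) : Function.support (-X) = Function.support X := by
  ext x
  simp only [Function.mem_support, Pi.neg_apply, ne_eq]
  generalize X x = s
  decide +revert

theorem Finset.sum_ncard_setOf_mem (E : Finset α) {𝒦 : Set (Set α)} (h𝒦 : 𝒦.Finite)
    {k : ℕ} (hE : ∀ K ∈ 𝒦, K ⊆ E ∧ K.ncard = k) :
    ∑ e ∈ E, {K ∈ 𝒦 | e ∈ K}.ncard = 𝒦.ncard * k := by
  classical
  obtain ⟨𝒦, rfl⟩ := h𝒦.exists_finset_coe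
  have hK : ∀ K ∈ 𝒦, (E.bipartiteBelow (· ∈ ·) K).card = k := fun K hK' => by
    rw [← (hE K hK').2, ← ncard_coe_finset, Finset.bipartiteBelow, Finset.coe_filter]
    congr 1
    ext x
    exact ⟨And.right, fun hx => ⟨(hE K hK').1 hx, hx⟩⟩
  have hA : ∀ e, {K ∈ (𝒦 : Set (Set α)) | e ∈ K}.ncard = (𝒦.bipartiteAbove (· ∈ ·) e).card :=
    fun e => by
      rw [← ncard_coe_finset, Finset.bipartiteAbove, Finset.coe_filter]
      rfl
  simp_rw [hA]
  rw [Finset.sum_card_bipartiteAbove_eq_sum_card_bipartiteBelow (r := (· ∈ ·)),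
    Finset.sum_congr rfl hK, Finset.sum_const, smul_eq_mul, ncard_coe_finset]

theorem Nat.mul_choose_pred {n : ℕ} (hn : n ≠ 0) (k : ℕ) :
    n * (n - 1).choose k = n.choose (k + 1) * (k + 1) := by
  obtain ⟨m, rfl⟩ := Nat.exists_eq_succ_of_ne_zero hn
  exact Nat.add_one_mul_choose_eq m k

theorem div_mul_choose_le_of_mul_choose_pred_le {n r : ℕ} {c d S : ℚ} (hd : 0 < d) (hn : n ≠ 0)
    (hr : 3 ≤ r) (h : n * (c / (d * ((r : ℚ) - 2)) * ((n - 1).choose (r - 3) : ℕ)) ≤ S * (r - 1)) :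
    c / (d * ((r : ℚ) - 1)) * (n.choose (r - 2) : ℕ) ≤ S := by
  have hchoose := congrArg (Nat.cast (R := ℚ)) (Nat.mul_choose_pred hn (r - 3))
  rw [show r - 3 + 1 = r - 2 by omega] at hchoose
  push_cast [Nat.cast_sub (by omega : 2 ≤ r)] at hchoose
  have hr' : (3 : ℚ) ≤ r := by exact_mod_cast hr
  have hlhs : c / (d * ((r : ℚ) - 1)) * (n.choose (r - 2) : ℕ) =
      n * (c / (d * ((r : ℚ) - 2)) * ((n - 1).choose (r - 3) : ℕ)) / (r - 1) := by
    rw [mul_left_comm, hchoose]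
    field_simp [show (r : ℚ) - 2 ≠ 0 by linarith]
  rwa [hlhs, div_le_iff₀ (by linarith)]

namespace Matroid

variable {M : Matroid α} {e : α} {r s : ℕ} {B I X H : Set α}

theorem circuit_iff_isCircuit {C : Set α} : M.Circuit C ↔ M.IsCircuit C :=
  isCircuit_iff.symm

namespace HasRank

theorem ncard_eq_of_isBase (hR : M.HasRank r) (hB : M.IsBase B) : B.ncard = r := by
  obtain ⟨B₀, hB₀, rfl⟩ := hR
  exact hB.ncard_eq_ncard_of_isBase hB₀

theorem unique (hr : M.HasRank r) (hs : M.HasRank s) : r = s := by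
  obtain ⟨B, hB, rfl⟩ := hr
  exact hs.ncard_eq_of_isBase hB

theorem contractElem (hR : M.HasRank r) (he : M.IsNonloop e) : (M ／ {e}).HasRank (r - 1) := by
  obtain ⟨B, hB, heB⟩ := he.exists_mem_isBase
  refine ⟨B \ {e}, ?_, by rw [ncard_sdiff_singleton_of_mem heB, hR.ncard_eq_of_isBase hB]⟩
  rw [he.indep.contract_isBase_iff, sdiff_union_of_subset (singleton_subset_iff.2 heB)]
  exact ⟨hB, disjoint_sdiff_left⟩

variable [M.RankFinite]

theorem ncard_le_of_indep (hR : M.HasRank r) (hI : M.Indep I) : I.ncard ≤ r := by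
  obtain ⟨B, hB, hIB⟩ := hI.exists_isBase_superset
  exact hR.ncard_eq_of_isBase hB ▸ ncard_le_ncard hIB hB.finite

theorem isBase_of_indep_of_le_ncard (hR : M.HasRank r) (hI : M.Indep I) (hIr : r ≤ I.ncard) :
    M.IsBase I := by
  obtain ⟨B, hB, hIB⟩ := hI.exists_isBase_superset
  rwa [eq_of_subset_of_ncard_le hIB (hR.ncard_eq_of_isBase hB ▸ hIr) hB.finite]

end HasRank

theorem Paving.indep_of_ncard_lt [M.Finite] (hP : M.Paving) (hR : M.HasRank r) (hX : X ⊆ M.E)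
    (hXr : X.ncard < r) : M.Indep X := by
  by_contra hXi
  obtain ⟨C, hCX, hC⟩ := (not_indep_iff hX).1 hXi |>.exists_isCircuit_subset
  have := ncard_le_ncard hCX (M.ground_finite.subset hX)
  rcases hP r hR C (circuit_iff_isCircuit.2 hC) with h | h <;> omega

theorem Paving.simple' [M.Finite] (hP : M.Paving) (hR : M.HasRank 3) : M.Simple' :=
  fun _ hI _ hI2 => hP.indep_of_ncard_lt hR hI (by omega)

theorem Paving.isNonloop [M.Finite] (hP : M.Paving) (hR : M.HasRank r) (hr : 2 ≤ r)
    (he : e ∈ M.E) : M.IsNonloop e :=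
  indep_singleton.1 <|
    hP.indep_of_ncard_lt hR (singleton_subset_iff.2 he) (by rw [ncard_singleton]; omega)

theorem paving_of_forall_indep [M.Finite] (hR : M.HasRank r)
    (h : ∀ X ⊆ M.E, X.ncard < r → M.Indep X) : M.Paving := by
  rintro s hs C hC
  obtain rfl := hs.unique hR
  rw [circuit_iff_isCircuit] at hC
  obtain ⟨c, hc⟩ := hC.nonempty
  have hpos := (ncard_pos hC.finite).2 hC.nonempty
  have hle := hR.ncard_le_of_indep (hC.sdiff_singleton_indep hc)
  have hge : s ≤ C.ncard := not_lt.1 fun hlt => hC.not_indep (h C hC.subset_ground hlt)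
  rw [ncard_sdiff_singleton_of_mem hc] at hle
  omega

theorem Paving.contractElem [M.Finite] (hP : M.Paving) (hR : M.HasRank r) (he : M.IsNonloop e) :
    (M ／ {e}).Paving := by
  refine paving_of_forall_indep (hR.contractElem he) fun X hX hXr => ?_
  have heX : e ∉ X := fun h => (hX h).2 rfl
  rw [he.contractElem_indep_iff]
  refine ⟨heX, hP.indep_of_ncard_lt hR (insert_subset he.mem_ground (hX.trans sdiff_subset)) ?_⟩
  rw [ncard_insert_of_notMem heX ((M ／ {e}).ground_finite.subset hX)]
  omega

theorem indepHyperplane_iff [M.RankFinite] (hR : M.HasRank r) :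
    M.IndepHyperplane H ↔ M.IsFlat H ∧ M.Indep H ∧ H.ncard + 1 = r := by
  constructor
  · rintro ⟨⟨hH, hHE, hmax⟩, hI⟩
    refine ⟨hH, hI, ?_⟩
    obtain ⟨B, hB, hHB⟩ := hI.exists_isBase_superset
    have hHB' : H ⊂ B := hHB.ssubset_of_ne fun h => hHE (by rw [← hH.closure, h, hB.closure_eq])
    obtain ⟨x, hxB, hxH⟩ := exists_of_ssubset hHB'
    have hxI : M.Indep (insert x H) := hB.indep.subset (insert_subset hxB hHB)
    have hxcl : x ∈ M.closure (insert x H) :=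
      M.mem_closure_of_mem (mem_insert x H) hxI.subset_ground
    obtain hcl | hcl := hmax _ (M.isFlat_closure (insert x H))
      ((subset_insert x H).trans (M.subset_closure _ hxI.subset_ground))
    · exact absurd (hcl ▸ hxcl) hxH
    · have := hR.ncard_eq_of_isBase (isBase_iff_indep_closure_eq.2 ⟨hxI, hcl⟩)
      rwa [ncard_insert_of_notMem hxH hI.finite] at this
  · rintro ⟨hH, hI, hcard⟩
    refine ⟨⟨hH, ?_, fun F hF hHF => or_iff_not_imp_left.2 fun hFH => ?_⟩, hI⟩
    · rintro rfl
      have := hR.ncard_eq_of_isBase (ground_indep_iff_isBase.1 hI)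
      omega
    obtain ⟨x, hxF, hxH⟩ := exists_of_ssubset (hHF.ssubset_of_ne (Ne.symm hFH))
    have hxI : M.Indep (insert x H) :=
      (hI.insert_indep_iff_of_notMem hxH).2 ⟨hF.subset_ground hxF, by rwa [hH.closure]⟩
    have hB := hR.isBase_of_indep_of_le_ncard hxI
      (by rw [ncard_insert_of_notMem hxH hI.finite]; omega)
    refine hF.subset_ground.antisymm ?_
    rw [← hB.closure_eq, ← hF.closure]
    exact M.closure_subset_closure (insert_subset hxF hHF)

theorem isFlat_contractElem_iff (he : e ∈ M.E) :
    (M ／ {e}).IsFlat H ↔ e ∉ H ∧ M.IsFlat (insert e H) := by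
  rw [isFlat_iff_closure_eq, isFlat_iff_closure_eq, contract_closure_eq, union_singleton]
  constructor
  · intro h
    have heH : e ∉ H := fun heH => (h.symm ▸ heH : e ∈ M.closure (insert e H) \ {e}).2 rfl
    refine ⟨heH, ?_⟩
    conv_rhs => rw [← h]
    rw [insert_sdiff_singleton, insert_eq_of_mem (M.mem_closure_of_mem' (mem_insert e H) he)]
  · rintro ⟨heH, h⟩
    rw [h, insert_sdiff_of_mem _ (mem_singleton e), sdiff_singleton_eq_self heH]

theorem indepHyperplane_contractElem_iff [M.RankFinite] (hR : M.HasRank r) (he : M.IsNonloop e) :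
    (M ／ {e}).IndepHyperplane H ↔ e ∉ H ∧ M.IndepHyperplane (insert e H) := by
  rw [indepHyperplane_iff (hR.contractElem he), indepHyperplane_iff hR,
    isFlat_contractElem_iff he.mem_ground, he.contractElem_indep_iff]
  constructor
  · rintro ⟨⟨heH, hH⟩, ⟨-, hI⟩, hcard⟩
    refine ⟨heH, hH, hI, ?_⟩
    rw [ncard_insert_of_notMem heH (hI.finite.subset (subset_insert e H))]
    omega
  · rintro ⟨heH, hH, hI, hcard⟩
    rw [ncard_insert_of_notMem heH (hI.finite.subset (subset_insert e H))] at hcard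
    exact ⟨⟨heH, hH⟩, ⟨heH, hI⟩, by omega⟩

theorem IsCircuit.contractElem_dep {C : Set α} (hC : M.IsCircuit C) (he : M.IsNonloop e) :
    (M ／ {e}).Dep (C \ {e}) :=
  hC.contract_dep_of_not_subset fun hCe => hC.not_indep (he.indep.subset hCe)

open Function

structure IsOrientation (M : Matroid α) (𝒞 : Set (α → SignType)) : Prop where
  isCircuit_support : ∀ X ∈ 𝒞, M.IsCircuit (support X)
  exists_support_eq : ∀ C, M.IsCircuit C → ∃ X ∈ 𝒞, support X = C
  neg_mem : ∀ X ∈ 𝒞, -X ∈ 𝒞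
  elim : ∀ X ∈ 𝒞, ∀ Y ∈ 𝒞, X ≠ -Y → ∀ e, X e = 1 → Y e = -1 →
    ∃ Z ∈ 𝒞, Z e = 0 ∧ ∀ f, Z f ≠ 0 → Z f = X f ∨ Z f = Y f

theorem orientable_iff : M.Orientable ↔ ∃ 𝒞, M.IsOrientation 𝒞 := by
  have hconf : ∀ a b c : SignType, ((a = 1 → b = 1 ∨ c = 1) ∧ (a = -1 → b = -1 ∨ c = -1)) ↔
      (a ≠ 0 → a = b ∨ a = c) := by decide
  simp only [Orientable, circuit_iff_isCircuit, hconf]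
  exact ⟨fun ⟨𝒞, h₁, h₂, h₃, h₄⟩ => ⟨𝒞, ⟨h₁, h₂, h₃, h₄⟩⟩,
    fun ⟨𝒞, ⟨h₁, h₂, h₃, h₄⟩⟩ => ⟨𝒞, h₁, h₂, h₃, h₄⟩⟩

namespace IsOrientation

variable {𝒞 : Set (α → SignType)} {X Y Z W : α → SignType} {f g : α}

theorem exists_elim_of_eq_neg (h : M.IsOrientation 𝒞) (hX : X ∈ 𝒞) (hY : Y ∈ 𝒞) (hXY : X ≠ -Y)
    (hXg : X g ≠ 0) (hXYg : X g = -Y g) :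
    ∃ Z ∈ 𝒞, Z g = 0 ∧ ∀ f, Z f ≠ 0 → Z f = X f ∨ Z f = Y f := by
  have hYX : Y ≠ -X := fun hYX => hXY (by rw [hYX, neg_neg])
  obtain ⟨hX1, hY1⟩ | ⟨hX1, hY1⟩ : (X g = 1 ∧ Y g = -1) ∨ (X g = -1 ∧ Y g = 1) := by
    rw [hXYg] at hXg ⊢
    generalize Y g = s at hXg ⊢
    decide +revert
  · exact h.elim X hX Y hY hXY g hX1 hY1
  · obtain ⟨Z, hZ, hZg, hZconf⟩ := h.elim Y hY X hX hYX g hY1 hX1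
    exact ⟨Z, hZ, hZg, fun f hf => (hZconf f hf).symm⟩

/-- Induction on the number of elements other than `e` where `W` and `Z` disagree: eliminating
`W` against `Z` at one of them removes it and creates no new disagreement. -/
theorem exists_conformal_ssubset [M.Finitary] (h : M.IsOrientation 𝒞) (hZ : Z ∈ 𝒞) (hW : W ∈ 𝒞)
    (hWZ : support W ⊆ insert e (support Z)) (hss : support W \ {e} ⊂ support Z \ {e}) :
    ∃ U ∈ 𝒞, support U \ {e} ⊂ support Z \ {e} ∧ ∀ g ≠ e, U g ≠ 0 → U g = Z g := by
  induction hn : {g | g ≠ e ∧ W g ≠ 0 ∧ W g ≠ Z g}.ncard using Nat.strong_induction_on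
    generalizing W with
  | _ n ih =>
  by_cases hagree : ∀ g ≠ e, W g ≠ 0 → W g = Z g
  · exact ⟨W, hW, hss, hagree⟩
  push Not at hagree
  obtain ⟨g, hge, hWg, hWZg⟩ := hagree
  have hZg : Z g ≠ 0 := ((mem_insert_iff.1 (hWZ hWg)).resolve_left hge :)
  have hopp : W g = -Z g := by
    generalize W g = a, Z g = b at *
    decide +revert
  have hne : W ≠ -Z := fun hWZ' => hss.ne (by rw [hWZ', SignType.support_neg])
  obtain ⟨V, hV, hVg, hVconf⟩ := h.exists_elim_of_eq_neg hW hZ hne hWg hopp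
  have hVsupp : support V ⊆ support W ∪ support Z := fun x hx =>
    (hVconf x hx).imp (fun hVW => by rwa [mem_support, ← hVW])
      (fun hVZ => by rwa [mem_support, ← hVZ])
  refine ih _ ?_ hV (hVsupp.trans (union_subset hWZ (subset_insert _ _))) ?_ rfl
  · rw [← hn]
    refine ncard_lt_ncard ?_ ((h.isCircuit_support W hW).finite.subset fun x hx => hx.2.1)
    refine (ssubset_iff_of_subset ?_).2 ⟨g, ⟨hge, hWg, hWZg⟩, fun hgV => hgV.2.1 hVg⟩
    rintro x ⟨hxe, hVx, hVZx⟩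
    have hVWx : V x = W x := (hVconf x hVx).resolve_right hVZx
    exact ⟨hxe, hVWx ▸ hVx, hVWx ▸ hVZx⟩
  · refine (ssubset_iff_of_subset ?_).2 ⟨g, ⟨hZg, hge⟩, fun hgV => hgV.1 hVg⟩
    rintro x ⟨hVx, hxe⟩
    exact ⟨(hVsupp hVx).elim (fun hWx => (hss.subset ⟨hWx, hxe⟩).1) id, hxe⟩

/-- Take a conformal elimination `Z` with `support Z \ {e}` as small as possible. A circuit of
`M ／ {e}` strictly inside `support Z \ {e}` would lift to a signed circuit `W` of `M`, and
`exists_conformal_ssubset` would turn `W` into a smaller conformal elimination. -/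
theorem exists_elim_contractElem [M.Finitary] (h : M.IsOrientation 𝒞) (he : M.IsNonloop e)
    (hX : X ∈ 𝒞) (hY : Y ∈ 𝒞) (hXY : X ≠ -Y) (hfe : f ≠ e) (hXf : X f = 1) (hYf : Y f = -1) :
    ∃ Z ∈ 𝒞, (M ／ {e}).IsCircuit (support Z \ {e}) ∧ Z f = 0 ∧
      ∀ g ≠ e, Z g ≠ 0 → Z g = X g ∨ Z g = Y g := by
  obtain ⟨Z₀, hZ₀, hZ₀f, hZ₀conf⟩ := h.elim X hX Y hY hXY f hXf hYf
  obtain ⟨Z, ⟨hZ, hZf, hZconf⟩, hmin⟩ :=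
    (measure fun Z : α → SignType => (support Z \ {e}).ncard).wf.has_min
      {Z ∈ 𝒞 | Z f = 0 ∧ ∀ g ≠ e, Z g ≠ 0 → Z g = X g ∨ Z g = Y g}
      ⟨Z₀, hZ₀, hZ₀f, fun g _ => hZ₀conf g⟩
  refine ⟨Z, hZ, ?_, hZf, hZconf⟩
  obtain ⟨C, hCZ, hC⟩ := ((h.isCircuit_support Z hZ).contractElem_dep he).exists_isCircuit_subset
  obtain rfl | hCZ := hCZ.eq_or_ssubset
  · exact hC
  exfalso
  obtain ⟨D, hD, -, hDC⟩ := hC.exists_subset_isCircuit_of_contract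
  obtain ⟨W, hW, rfl⟩ := h.exists_support_eq D hD
  have hWC : support W \ {e} ⊆ C := sdiff_subset_iff.2 (union_comm C {e} ▸ hDC)
  have hWZ : support W ⊆ insert e (support Z) := by
    rw [← singleton_union, ← sdiff_subset_iff]
    exact hWC.trans (hCZ.subset.trans sdiff_subset)
  obtain ⟨U, hU, hUZ, hUconf⟩ := h.exists_conformal_ssubset hZ hW hWZ (hWC.trans_ssubset hCZ)
  have hUf : U f = 0 := by_contra fun hUf => hUf ((hUconf f hfe hUf).trans hZf)
  refine hmin U ⟨hU, hUf, fun g hge hUg => ?_⟩ (ncard_lt_ncard hUZ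
    ((h.isCircuit_support Z hZ).finite.sdiff))
  have hUZg := hUconf g hge hUg
  rw [hUZg] at hUg ⊢
  exact hZconf g hge hUg

theorem contractElem [DecidableEq α] [M.Finitary] (h : M.IsOrientation 𝒞) (he : M.IsNonloop e) :
    (M ／ {e}).IsOrientation
      {Y | ∃ X ∈ 𝒞, (M ／ {e}).IsCircuit (support X \ {e}) ∧ update X e 0 = Y} where
  isCircuit_support := by
    rintro _ ⟨X, -, hX, rfl⟩
    rwa [support_update_zero]
  exists_support_eq C hC := by
    obtain ⟨D, hD, hCD, hDC⟩ := hC.exists_subset_isCircuit_of_contract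
    obtain ⟨X, hX, rfl⟩ := h.exists_support_eq D hD
    have heC : e ∉ C := fun heC => (hC.subset_ground heC).2 rfl
    have hXC : support X \ {e} = C :=
      (sdiff_subset_iff.2 (union_comm C {e} ▸ hDC)).antisymm (subset_sdiff_singleton hCD heC)
    exact ⟨_, ⟨X, hX, hXC ▸ hC, rfl⟩, by rw [support_update_zero, hXC]⟩
  neg_mem := by
    rintro _ ⟨X, hX, hXC, rfl⟩
    refine ⟨-X, h.neg_mem X hX, by rwa [SignType.support_neg], ?_⟩
    ext g
    obtain rfl | hge := eq_or_ne g e <;> simp [*]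
  elim := by
    rintro _ ⟨X, hX, -, rfl⟩ _ ⟨Y, hY, -, rfl⟩ hXY f hXf hYf
    have hfe : f ≠ e := by
      rintro rfl
      simp at hXf
    rw [update_of_ne hfe] at hXf hYf
    have hXY' : X ≠ -Y := by
      rintro rfl
      refine hXY (funext fun g => ?_)
      obtain rfl | hge := eq_or_ne g e <;> simp [*]
    obtain ⟨Z, hZ, hZC, hZf, hZconf⟩ := h.exists_elim_contractElem he hX hY hXY' hfe hXf hYf
    refine ⟨update Z e 0, ⟨Z, hZ, hZC, rfl⟩, by rwa [update_of_ne hfe], fun g hg => ?_⟩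
    have hge : g ≠ e := by
      rintro rfl
      simp at hg
    simp only [update_of_ne hge] at hg ⊢
    exact hZconf g hge hg

end IsOrientation

theorem Orientable.contractElem [M.Finitary] (h : M.Orientable) (he : M.IsNonloop e) :
    (M ／ {e}).Orientable := by
  classical
  obtain ⟨_, h𝒞⟩ := orientable_iff.1 h
  exact orientable_iff.2 ⟨_, h𝒞.contractElem he⟩

theorem ncard_indepHyperplane_contractElem [M.RankFinite] (hR : M.HasRank r)
    (he : M.IsNonloop e) :
    {H | (M ／ {e}).IndepHyperplane H}.ncard = {K | M.IndepHyperplane K ∧ e ∈ K}.ncard := by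
  have hiff := fun H => indepHyperplane_contractElem_iff (H := H) hR he
  refine ncard_congr (fun H _ => insert e H) (fun H hH => ⟨((hiff H).1 hH).2, mem_insert e H⟩)
    (fun H₁ H₂ hH₁ hH₂ h => ?_) fun K ⟨hK, heK⟩ => ?_
  · rw [← insert_sdiff_self_of_notMem ((hiff H₁).1 hH₁).1, h,
      insert_sdiff_self_of_notMem ((hiff H₂).1 hH₂).1]
  · have hKe : insert e (K \ {e}) = K := by rw [insert_sdiff_singleton, insert_eq_of_mem heK]
    exact ⟨K \ {e}, (hiff _).2 ⟨fun h => h.2 rfl, by rwa [hKe]⟩, hKe⟩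

theorem sum_ncard_indepHyperplane_contractElem [M.Finite] (hR : M.HasRank r)
    (hnl : ∀ e ∈ M.E, M.IsNonloop e) :
    ∑ e ∈ M.ground_finite.toFinset, {H | (M ／ {e}).IndepHyperplane H}.ncard =
      {H | M.IndepHyperplane H}.ncard * (r - 1) := by
  rw [← M.ground_finite.toFinset.sum_ncard_setOf_mem
    (M.ground_finite.finite_subsets.subset fun H hH => hH.1.1.subset_ground) fun H hH => ?_]
  · refine Finset.sum_congr rfl fun e he => ?_
    exact ncard_indepHyperplane_contractElem hR (hnl e (M.ground_finite.mem_toFinset.1 he))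
  · have := ((indepHyperplane_iff hR).1 hH).2.2
    exact ⟨by simpa using hH.1.1.subset_ground, by omega⟩

theorem ncard_mul_le_ncard_indepHyperplane_mul [M.Finite] (hR : M.HasRank r) (hr : 1 ≤ r)
    (hnl : ∀ e ∈ M.E, M.IsNonloop e) {c : ℚ}
    (hc : ∀ e ∈ M.E, c ≤ {H | (M ／ {e}).IndepHyperplane H}.ncard) :
    M.E.ncard * c ≤ {H | M.IndepHyperplane H}.ncard * ((r : ℚ) - 1) := by
  have hsum := congrArg (Nat.cast (R := ℚ)) (sum_ncard_indepHyperplane_contractElem hR hnl)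
  rw [Nat.cast_sum, Nat.cast_mul, Nat.cast_sub hr, Nat.cast_one] at hsum
  rw [← hsum, ncard_eq_toFinset_card _ M.ground_finite, ← nsmul_eq_mul, ← Finset.sum_const]
  exact Finset.sum_le_sum fun e he => hc e (M.ground_finite.mem_toFinset.1 he)

end Matroid

/-- If every simple rank-3 oriented matroid on `n ≥ 8` elements has at least `6n/13`
independent hyperplanes, then every oriented paving matroid of rank `r ≥ 3` on
`n ≥ 5 + r` elements has at least `(12 / (13 (r - 1))) * C(n, r - 2)` independent
hyperplanes. -/
theorem paving_indepHyperplanes_bound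
    (hyp : ∀ M : Matroid α, M.Finite → M.Orientable → M.Simple' → M.HasRank 3 →
      8 ≤ M.E.ncard →
      6 * (M.E.ncard : ℚ) / 13 ≤ ({H | M.IndepHyperplane H}.ncard : ℚ)) :
    ∀ (M : Matroid α) (r : ℕ), M.Finite → M.Orientable → M.Paving → M.HasRank r →
      3 ≤ r → 5 + r ≤ M.E.ncard →
      12 / (13 * ((r : ℚ) - 1)) * ((M.E.ncard.choose (r - 2) : ℕ) : ℚ) ≤
        ({H | M.IndepHyperplane H}.ncard : ℚ) := by
  intro M r
  induction r using Nat.strong_induction_on generalizing M with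
  | _ r ih =>
  intro hfin hor hP hR hr hn
  obtain rfl | hr : r = 3 ∨ 4 ≤ r := by omega
  · convert hyp M hfin hor (hP.simple' hR) hR (by omega) using 1
    rw [Nat.choose_one_right]
    ring
  have hnl : ∀ e ∈ M.E, M.IsNonloop e := fun e he => hP.isNonloop hR (by omega) he
  have hminor : ∀ e ∈ M.E, 12 / (13 * ((r : ℚ) - 2)) * ((M.E.ncard - 1).choose (r - 3) : ℕ) ≤
      {H | (M.contract {e}).IndepHyperplane H}.ncard := by
    intro e he
    have hE : (M.contract {e}).E.ncard = M.E.ncard - 1 := by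
      rw [Matroid.contract_ground, ncard_sdiff_singleton_of_mem he]
    have := ih (r - 1) (by omega) (M.contract {e}) inferInstance (hor.contractElem (hnl e he))
      (hP.contractElem hR (hnl e he)) (hR.contractElem (hnl e he)) (by omega) (by omega)
    rw [hE, show r - 1 - 2 = r - 3 by omega, Nat.cast_sub (by omega : 1 ≤ r)] at this
    convert this using 4
    ring
  exact div_mul_choose_le_of_mul_choose_pred_le (by norm_num) (by omega) (by omega)
    (Matroid.ncard_mul_le_ncard_indepHyperplane_mul hR (by omega) hnl hminor)
end
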